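/- arXiv:2509.01096 — 3 statements merged into one kernel-verified Lean document; each statement's English description precedes it below -/
import Mathlib

section
/- Let k ≥ 1 and n ≥ 2k+1, and let G be the k-circulant graph on vertices {0,...,n−1} placed in convex position in cyclic order. Then every edge of G crosses at most k² − k other edges, where two edges {a,b} and {c,d} (with all four endpoints distinct) cross if and only if exactly one of c, d lies in the cyclic open interval from a to b. -/
/-- Cyclic distance between `i` and `j` among `n` points on a circle. -/
def cdist (n i j : ℕ) : ℕ := min (max i j - min i j) (n - (max i j - min i j))

/-- The `k`-circulant graph on `n` vertices: `i ~ j` iff `1 ≤ cyclic distance ≤ k`. -/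
def circulant (n k : ℕ) : SimpleGraph (Fin n) where
  Adj i j := i ≠ j ∧ cdist n i.1 j.1 ≤ k
  symm := ⟨by
    intro i j h
    exact ⟨h.1.symm, by simpa [cdist, Nat.max_comm, Nat.min_comm] using h.2⟩⟩
  loopless := ⟨fun i h => h.1 rfl⟩

instance (n k : ℕ) : DecidableRel (circulant n k).Adj :=
  fun i j => inferInstanceAs (Decidable (i ≠ j ∧ cdist n i.1 j.1 ≤ k))

/-- `c` lies strictly inside the cyclic open interval from `a` to `b`
(going counterclockwise, indices mod `n`). -/
abbrev cbtw (n a b c : ℕ) : Prop :=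
  0 < (c + n - a) % n ∧ (c + n - a) % n < (b + n - a) % n

instance (p q : Prop) [Decidable p] [Decidable q] : Decidable (Xor' p q) :=
  inferInstanceAs (Decidable ((p ∧ ¬q) ∨ (q ∧ ¬p)))

/-- Chords `{a,b}` and `{c,d}` (all four endpoints distinct) of a convex polygon
with vertices `0,…,n−1` in cyclic order cross iff exactly one of `c, d` lies in
the cyclic open interval from `a` to `b`. -/
abbrev crossN (n a b c d : ℕ) : Prop :=
  a ≠ c ∧ a ≠ d ∧ b ≠ c ∧ b ≠ d ∧ Xor' (cbtw n a b c) (cbtw n a b d)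

/-- Number of edges of `G` crossing the chord `{a,b}`. -/
def crossCount {n : ℕ} (G : SimpleGraph (Fin n)) [DecidableRel G.Adj]
    (a b : Fin n) : ℕ :=
  (G.edgeFinset.filter fun e => ∃ c d : Fin n, e = s(c, d) ∧ crossN n a.1 b.1 c.1 d.1).card

lemma mod_recover (n a x : ℕ) (ha : a ≤ n) :
    (a + (x + n - a) % n) % n = x % n := by
  rw [Nat.add_mod_mod]
  have h : a + (x + n - a) = x + n := by omega
  rw [h, Nat.add_mod_right]

lemma shift_mod (n a s t : ℕ) (hn : 0 < n) (hs : s < n) :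
    ((a + t) % n + n - (a + s) % n) % n = (t + n - s) % n := by
  have hA : (a + s) % n < n := Nat.mod_lt _ hn
  have hq := Nat.mod_add_div (a + s) n
  set Q := n * ((a + s) / n) with hQdef
  have e1 : (a + t) % n + n - (a + s) % n = (a + t) % n + (n - (a + s) % n) := by omega
  rw [e1, Nat.mod_add_mod]
  have e2 : a + t + (n - (a + s) % n) = (t + (n - s)) + Q := by omega
  rw [e2, hQdef, Nat.add_mul_mod_self_left]
  congr 1
  omega

lemma cdist_min_aux (n x y : ℕ) (hx : x < n) (hy : y < n) (hxy : x ≤ y) :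
    cdist n x y = min ((y + n - x) % n) ((x + n - y) % n) := by
  have h1 : (y + n - x) % n = y - x := by
    have h : y + n - x = (y - x) + n := by omega
    rw [h, Nat.add_mod_right]
    exact Nat.mod_eq_of_lt (by omega)
  rcases eq_or_lt_of_le hxy with rfl | hlt
  · unfold cdist
    rw [h1]
    simp
  · have h2 : (x + n - y) % n = n - (y - x) := by
      have h : x + n - y = n - (y - x) := by omega
      rw [h]; exact Nat.mod_eq_of_lt (by omega)
    rw [h1, h2]
    unfold cdist
    rw [Nat.max_eq_right hxy, Nat.min_eq_left hxy]

lemma cdist_min (n x y : ℕ) (hx : x < n) (hy : y < n) :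
    cdist n x y = min ((y + n - x) % n) ((x + n - y) % n) := by
  rcases le_total x y with h | h
  · exact cdist_min_aux n x y hx hy h
  · have h2 := cdist_min_aux n y x hy hx h
    rw [show cdist n x y = cdist n y x by unfold cdist; omega, h2]
    exact Nat.min_comm _ _

lemma dd_zero_iff (n : ℕ) (hn : 0 < n) (u v : Fin n) :
    (v.1 + n - u.1) % n = 0 ↔ u = v := by
  constructor
  · intro h
    have h2 := mod_recover n u.1 v.1 (le_of_lt u.isLt)
    rw [h] at h2
    simp only [Nat.add_zero] at h2
    exact Fin.ext (by rwa [Nat.mod_eq_of_lt u.isLt, Nat.mod_eq_of_lt v.isLt] at h2)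
  · intro h
    subst h
    have h : u.1 + n - u.1 = n := by omega
    rw [h, Nat.mod_self]

lemma dd_add (n : ℕ) (hn : 0 < n) (u v : Fin n) (huv : u ≠ v) :
    (v.1 + n - u.1) % n + (u.1 + n - v.1) % n = n := by
  have hx : (v.1 + n - u.1) % n ≠ 0 := fun h => huv ((dd_zero_iff n hn u v).mp h)
  have hy : (u.1 + n - v.1) % n ≠ 0 := fun h => huv ((dd_zero_iff n hn v u).mp h).symm
  have hx' : (v.1 + n - u.1) % n < n := Nat.mod_lt _ hn
  have hy' : (u.1 + n - v.1) % n < n := Nat.mod_lt _ hn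
  have hsum : ((v.1 + n - u.1) % n + (u.1 + n - v.1) % n) % n = 0 := by
    rw [Nat.add_mod_mod, Nat.mod_add_mod]
    have h : v.1 + n - u.1 + (u.1 + n - v.1) = n + n := by
      have := u.isLt; have := v.isLt; omega
    rw [h, Nat.add_mod_left, Nat.mod_self]
  obtain ⟨c, hc⟩ := Nat.dvd_of_mod_eq_zero hsum
  rcases (by omega : c = 0 ∨ c = 1 ∨ 2 ≤ c) with rfl | rfl | h2
  · omega
  · omega
  · have h3 : n * 2 ≤ n * c := Nat.mul_le_mul_left n h2
    omega

lemma adj_iff (n k : ℕ) (hn : 0 < n) (u v : Fin n) :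
    (circulant n k).Adj u v ↔
      0 < (v.1 + n - u.1) % n ∧
        ((v.1 + n - u.1) % n ≤ k ∨ n - k ≤ (v.1 + n - u.1) % n) := by
  constructor
  · rintro ⟨hne, hcd⟩
    have h0 : (v.1 + n - u.1) % n ≠ 0 := fun h => hne ((dd_zero_iff n hn u v).mp h)
    have hadd := dd_add n hn u v hne
    rw [cdist_min n u.1 v.1 u.isLt v.isLt] at hcd
    rcases min_le_iff.mp hcd with h | h
    · exact ⟨by omega, Or.inl h⟩
    · exact ⟨by omega, Or.inr (by omega)⟩
  · rintro ⟨h0, h1⟩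
    have hne : u ≠ v := fun h => by
      rw [(dd_zero_iff n hn u v).mpr h] at h0; exact absurd h0 (lt_irrefl 0)
    have hadd := dd_add n hn u v hne
    refine ⟨hne, ?_⟩
    rw [cdist_min n u.1 v.1 u.isLt v.isLt]
    rcases h1 with h | h
    · exact min_le_of_left_le h
    · exact min_le_of_right_le (by omega)

lemma arith_bound (k D : ℕ) (h1 : 1 ≤ D) (h2 : D ≤ k) :
    (D - 1) * (2 * k - D) ≤ k ^ 2 - k := by
  obtain ⟨c, rfl⟩ : ∃ c, D = c + 1 := ⟨D - 1, by omega⟩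
  obtain ⟨e, rfl⟩ : ∃ e, k = c + 1 + e := ⟨k - (c + 1), by omega⟩
  have h3 : c + 1 - 1 = c := by omega
  have h4 : 2 * (c + 1 + e) - (c + 1) = c + 2 * e + 1 := by omega
  rw [h3, h4]
  have h5 : (c + 1 + e) ^ 2 - (c + 1 + e) = (c + e) ^ 2 + (c + e) :=
    Nat.sub_eq_of_eq_add (by ring)
  rw [h5]
  nlinarith [sq_nonneg e]

lemma nbr_card (n k : ℕ) (hk : 1 ≤ k) (hn : 2 * k + 1 ≤ n) (u : Fin n) :
    (Finset.univ.filter fun v => (circulant n k).Adj u v).card ≤ 2 * k := by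
  have hn0 : 0 < n := by omega
  have h := Finset.card_le_card_of_injOn
    (s := Finset.univ.filter fun v => (circulant n k).Adj u v)
    (fun v : Fin n => (v.1 + n - u.1) % n)
    (t := Finset.Icc 1 k ∪ Finset.Icc (n - k) (n - 1))
    (fun v hv => by
      show (v.1 + n - u.1) % n ∈ Finset.Icc 1 k ∪ Finset.Icc (n - k) (n - 1)
      rw [Finset.mem_coe, Finset.mem_filter] at hv
      obtain ⟨-, hadj⟩ := hv
      rw [adj_iff n k hn0 u v] at hadj
      have hlt : (v.1 + n - u.1) % n < n := Nat.mod_lt _ hn0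
      rcases hadj.2 with h | h
      · exact Finset.mem_union_left _ (Finset.mem_Icc.mpr ⟨hadj.1, h⟩)
      · exact Finset.mem_union_right _ (Finset.mem_Icc.mpr ⟨h, by omega⟩))
    (fun v hv w hw hvw => by
      have h1 := mod_recover n u.1 v.1 (le_of_lt u.isLt)
      have h2 := mod_recover n u.1 w.1 (le_of_lt u.isLt)
      simp only at hvw
      rw [hvw, h2, Nat.mod_eq_of_lt w.isLt] at h1
      rw [Nat.mod_eq_of_lt v.isLt] at h1
      exact (Fin.ext h1).symm)
  calc (Finset.univ.filter fun v => (circulant n k).Adj u v).card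
      ≤ (Finset.Icc 1 k ∪ Finset.Icc (n - k) (n - 1)).card := h
    _ ≤ (Finset.Icc 1 k).card + (Finset.Icc (n - k) (n - 1)).card := Finset.card_union_le _ _
    _ ≤ 2 * k := by rw [Nat.card_Icc, Nat.card_Icc]; omega

lemma cbtw_rev (n : ℕ) (hn : 0 < n) (a b c : Fin n) (hab : a ≠ b) (hca : c ≠ a) (hcb : c ≠ b) :
    cbtw n b.1 a.1 c.1 ↔ ¬ cbtw n a.1 b.1 c.1 := by
  set x := (c.1 + n - a.1) % n with hxdef
  set D := (b.1 + n - a.1) % n with hDdef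
  have hx0 : x ≠ 0 := fun h => hca ((dd_zero_iff n hn a c).mp h).symm
  have hD0 : D ≠ 0 := fun h => hab ((dd_zero_iff n hn a b).mp h)
  have hxn : x < n := Nat.mod_lt _ hn
  have hDn : D < n := Nat.mod_lt _ hn
  have hcval : c.1 = (a.1 + x) % n := by
    have h := mod_recover n a.1 c.1 (le_of_lt a.isLt)
    rw [Nat.mod_eq_of_lt c.isLt] at h; exact h.symm
  have hbval : b.1 = (a.1 + D) % n := by
    have h := mod_recover n a.1 b.1 (le_of_lt a.isLt)
    rw [Nat.mod_eq_of_lt b.isLt] at h; exact h.symm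
  have hxD : x ≠ D := fun h => hcb (Fin.ext (by rw [hcval, hbval, h]))
  have hy : (c.1 + n - b.1) % n = (x + n - D) % n := by
    rw [hcval, hbval]; exact shift_mod n a.1 D x hn hDn
  have hE : (a.1 + n - b.1) % n = n - D := by
    have := dd_add n hn a b hab
    omega
  unfold cbtw
  rw [hy, hE, ← hDdef, ← hxdef]
  rcases lt_or_gt_of_ne hxD with hlt | hgt
  · have h1 : (x + n - D) % n = n - (D - x) := by
      have h : x + n - D = n - (D - x) := by omega
      rw [h]; exact Nat.mod_eq_of_lt (by omega)
    rw [h1]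
    constructor
    · rintro ⟨-, h2⟩; omega
    · intro h2; exact absurd ⟨by omega, hlt⟩ h2
  · have h1 : (x + n - D) % n = x - D := by
      have h : x + n - D = (x - D) + n := by omega
      rw [h, Nat.add_mod_right]; exact Nat.mod_eq_of_lt (by omega)
    rw [h1]
    constructor
    · rintro ⟨-, -⟩ h2; omega
    · intro h2; exact ⟨by omega, by omega⟩

lemma crossN_symm (n : ℕ) (hn : 0 < n) (a b c d : Fin n) (hab : a ≠ b) :
    crossN n a.1 b.1 c.1 d.1 ↔ crossN n b.1 a.1 c.1 d.1 := by
  unfold crossN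
  constructor <;> rintro ⟨h1, h2, h3, h4, h5⟩
  · have hca : c ≠ a := fun h => h1 (congrArg Fin.val h).symm
    have hcb : c ≠ b := fun h => h3 (congrArg Fin.val h).symm
    have hda : d ≠ a := fun h => h2 (congrArg Fin.val h).symm
    have hdb : d ≠ b := fun h => h4 (congrArg Fin.val h).symm
    refine ⟨h3, h4, h1, h2, ?_⟩
    rw [cbtw_rev n hn a b c hab hca hcb, cbtw_rev n hn a b d hab hda hdb]
    simp only [Xor', Xor] at h5 ⊢
    tauto
  · have hca : c ≠ a := fun h => h3 (congrArg Fin.val h).symm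
    have hcb : c ≠ b := fun h => h1 (congrArg Fin.val h).symm
    have hda : d ≠ a := fun h => h4 (congrArg Fin.val h).symm
    have hdb : d ≠ b := fun h => h2 (congrArg Fin.val h).symm
    refine ⟨h3, h4, h1, h2, ?_⟩
    rw [cbtw_rev n hn a b c hab hca hcb, cbtw_rev n hn a b d hab hda hdb] at h5
    simp only [Xor', Xor] at h5 ⊢
    tauto

lemma crossCount_symm (n k : ℕ) (hn : 0 < n) (a b : Fin n) (hab : a ≠ b) :
    crossCount (circulant n k) a b = crossCount (circulant n k) b a := by
  unfold crossCount
  congr 1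
  apply Finset.filter_congr
  intro e _
  constructor
  · rintro ⟨c, d, rfl, h⟩
    exact ⟨c, d, rfl, (crossN_symm n hn a b c d hab).mp h⟩
  · rintro ⟨c, d, rfl, h⟩
    exact ⟨c, d, rfl, (crossN_symm n hn a b c d hab).mpr h⟩
lemma crossCount_le (k n : ℕ) (hk : 1 ≤ k) (hn : 2 * k + 1 ≤ n) (a b : Fin n)
    (hD1 : 1 ≤ (b.1 + n - a.1) % n) (hDk : (b.1 + n - a.1) % n ≤ k) :
    crossCount (circulant n k) a b ≤ k ^ 2 - k := by
  have hn0 : 0 < n := by omega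
  set D := (b.1 + n - a.1) % n with hDdef
  have hbD : b.1 = (a.1 + D) % n := by
    have h := mod_recover n a.1 b.1 (le_of_lt a.isLt)
    rw [Nat.mod_eq_of_lt b.isLt] at h; exact h.symm
  set S : Finset (Fin n) := Finset.univ.filter (fun c => cbtw n a.1 b.1 c.1) with hSdef
  set N : Fin n → Finset (Fin n) := fun u => Finset.univ.filter
      (fun v => (circulant n k).Adj u v ∧ ¬ cbtw n a.1 b.1 v.1 ∧ v ≠ a ∧ v ≠ b) with hNdef
  set P : Finset (Fin n × Fin n) := Finset.univ.filter
      (fun p => cbtw n a.1 b.1 p.1.1 ∧ p.2 ∈ N p.1) with hPdef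
  -- Step A
  have stepA : crossCount (circulant n k) a b ≤ P.card := by
    apply Finset.card_le_card_of_surjOn (fun p : Fin n × Fin n => s(p.1, p.2))
    intro e he
    rw [Finset.mem_coe, Finset.mem_filter] at he
    obtain ⟨heE, c, d, rfl, h1, h2, h3, h4, h5⟩ := he
    have hadj : (circulant n k).Adj c d := by
      rwa [SimpleGraph.mem_edgeFinset, SimpleGraph.mem_edgeSet] at heE
    have hca : c ≠ a := fun h => h1 (congrArg Fin.val h).symm
    have hcb : c ≠ b := fun h => h3 (congrArg Fin.val h).symm
    have hda : d ≠ a := fun h => h2 (congrArg Fin.val h).symm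
    have hdb : d ≠ b := fun h => h4 (congrArg Fin.val h).symm
    rcases h5 with ⟨hc, hd⟩ | ⟨hd, hc⟩
    · refine ⟨(c, d), Finset.mem_coe.mpr ?_, rfl⟩
      rw [hPdef, Finset.mem_filter]
      exact ⟨Finset.mem_univ _, hc, by
        rw [hNdef]; exact Finset.mem_filter.mpr ⟨Finset.mem_univ _, hadj, hd, hda, hdb⟩⟩
    · refine ⟨(d, c), Finset.mem_coe.mpr ?_, Sym2.eq_swap⟩
      rw [hPdef, Finset.mem_filter]
      exact ⟨Finset.mem_univ _, hd, by
        rw [hNdef]; exact Finset.mem_filter.mpr ⟨Finset.mem_univ _, hadj.symm, hc, hca, hcb⟩⟩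
  -- Step B
  have stepB : P ⊆ S.biUnion (fun u => (N u).image (fun v => (u, v))) := by
    intro p hp
    rw [hPdef, Finset.mem_filter] at hp
    obtain ⟨-, hp1, hp2⟩ := hp
    rw [Finset.mem_biUnion]
    exact ⟨p.1, by rw [hSdef, Finset.mem_filter]; exact ⟨Finset.mem_univ _, hp1⟩,
      Finset.mem_image.mpr ⟨p.2, hp2, rfl⟩⟩
  -- Step C
  have stepC : S.card ≤ D - 1 := by
    have hsub : S ⊆ (Finset.Ico 1 D).image
        (fun j => (⟨(a.1 + j) % n, Nat.mod_lt _ hn0⟩ : Fin n)) := by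
      intro c hc
      rw [hSdef, Finset.mem_filter] at hc
      obtain ⟨-, h0, hD'⟩ := hc
      refine Finset.mem_image.mpr ⟨(c.1 + n - a.1) % n, Finset.mem_Ico.mpr ⟨h0, hD'⟩, ?_⟩
      refine Fin.ext ?_
      show (a.1 + (c.1 + n - a.1) % n) % n = c.1
      rw [mod_recover n a.1 c.1 (le_of_lt a.isLt), Nat.mod_eq_of_lt c.isLt]
    calc S.card ≤ _ := Finset.card_le_card hsub
      _ ≤ (Finset.Ico 1 D).card := Finset.card_image_le
      _ = D - 1 := by rw [Nat.card_Ico]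
  -- Step D
  have stepD : ∀ u ∈ S, (N u).card ≤ 2 * k - D := by
    intro u hu
    rw [hSdef, Finset.mem_filter] at hu
    obtain ⟨-, hi0, hiD⟩ := hu
    set i := (u.1 + n - a.1) % n with hidef
    have hua : u.1 = (a.1 + i) % n := by
      have h := mod_recover n a.1 u.1 (le_of_lt a.isLt)
      rw [Nat.mod_eq_of_lt u.isLt] at h; exact h.symm
    set M : Finset (Fin n) := ((Finset.Icc 0 D).erase i).image
        (fun j => (⟨(a.1 + j) % n, Nat.mod_lt _ hn0⟩ : Fin n)) with hMdef
    have hvtx : ∀ j, j < n → ((a.1 + j) % n + n - a.1) % n = j := by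
      intro j hj
      have h := shift_mod n a.1 0 j hn0 hn0
      rw [Nat.add_zero, Nat.mod_eq_of_lt a.isLt] at h
      rw [h]
      have h2 : j + n - 0 = j + n := by omega
      rw [h2, Nat.add_mod_right, Nat.mod_eq_of_lt hj]
    have hMcard : M.card = D := by
      rw [hMdef, Finset.card_image_of_injOn, Finset.card_erase_of_mem, Nat.card_Icc]
      · omega
      · exact Finset.mem_Icc.mpr ⟨Nat.zero_le _, by omega⟩
      · intro j hj j' hj' hjj'
        rw [Finset.coe_erase, Set.mem_diff, Finset.mem_coe, Finset.mem_Icc] at hj hj'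
        have hjn : j < n := by omega
        have hjn' : j' < n := by omega
        have hv : (a.1 + j) % n = (a.1 + j') % n := congrArg Fin.val hjj'
        rw [← hvtx j hjn, ← hvtx j' hjn', hv]
    have hMsub : M ⊆ Finset.univ.filter (fun v => (circulant n k).Adj u v) := by
      intro x hx
      rw [hMdef, Finset.mem_image] at hx
      obtain ⟨j, hj, rfl⟩ := hx
      rw [Finset.mem_erase, Finset.mem_Icc] at hj
      obtain ⟨hji, -, hjD⟩ := hj
      have hjn : j < n := by omega
      rw [Finset.mem_filter]
      refine ⟨Finset.mem_univ _, ?_⟩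
      rw [adj_iff n k hn0]
      have hdd : ((((⟨(a.1 + j) % n, Nat.mod_lt _ hn0⟩ : Fin n)).1 + n - u.1) % n) = (j + n - i) % n := by
        show ((a.1 + j) % n + n - u.1) % n = (j + n - i) % n
        rw [hua]
        exact shift_mod n a.1 i j hn0 (by omega)
      rw [hdd]
      rcases lt_or_gt_of_ne hji with hlt | hgt
      · have h1 : (j + n - i) % n = n - (i - j) := by
          have h : j + n - i = n - (i - j) := by omega
          rw [h]; exact Nat.mod_eq_of_lt (by omega)
        rw [h1]
        exact ⟨by omega, Or.inr (by omega)⟩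
      · have h1 : (j + n - i) % n = j - i := by
          have h : j + n - i = (j - i) + n := by omega
          rw [h, Nat.add_mod_right]; exact Nat.mod_eq_of_lt (by omega)
        rw [h1]
        exact ⟨by omega, Or.inl (by omega)⟩
    have hdisj : Disjoint (N u) M := by
      rw [Finset.disjoint_right]
      intro x hx hxN
      rw [hMdef, Finset.mem_image] at hx
      obtain ⟨j, hj, rfl⟩ := hx
      rw [Finset.mem_erase, Finset.mem_Icc] at hj
      obtain ⟨hji, -, hjD⟩ := hj
      have hjn : j < n := by omega
      rw [hNdef, Finset.mem_filter] at hxN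
      obtain ⟨-, -, hncb, hxa, hxb⟩ := hxN
      rcases Nat.eq_zero_or_pos j with rfl | hj0
      · exact hxa (Fin.ext (by show (a.1 + 0) % n = a.1; rw [Nat.add_zero, Nat.mod_eq_of_lt a.isLt]))
      · rcases eq_or_lt_of_le hjD with heq | hjD'
        · exact hxb (Fin.ext (by show (a.1 + j) % n = b.1; rw [heq, hbD]))
        · have hcb2 : cbtw n a.1 b.1 ((a.1 + j) % n) :=
            ⟨by rw [hvtx j hjn]; omega, by rw [hvtx j hjn]; omega⟩
          exact hncb hcb2
    have hNsub : N u ⊆ Finset.univ.filter (fun v => (circulant n k).Adj u v) := by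
      intro x hx
      rw [hNdef, Finset.mem_filter] at hx
      exact Finset.mem_filter.mpr ⟨Finset.mem_univ _, hx.2.1⟩
    have hunion : (N u).card + D ≤ 2 * k := by
      have h1 : (N u ∪ M).card = (N u).card + M.card :=
        Finset.card_union_of_disjoint hdisj
      have h2 : (N u ∪ M) ⊆ Finset.univ.filter (fun v => (circulant n k).Adj u v) :=
        Finset.union_subset hNsub hMsub
      have h3 := Finset.card_le_card h2
      have h4 := nbr_card n k hk hn u
      omega
    omega
  -- assemble
  calc crossCount (circulant n k) a b ≤ P.card := stepA
    _ ≤ (S.biUnion (fun u => (N u).image (fun v => (u, v)))).card := Finset.card_le_card stepB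
    _ ≤ ∑ u ∈ S, ((N u).image (fun v => (u, v))).card := Finset.card_biUnion_le
    _ ≤ ∑ _u ∈ S, (2 * k - D) := Finset.sum_le_sum
        (fun u hu => le_trans Finset.card_image_le (stepD u hu))
    _ = S.card * (2 * k - D) := by rw [Finset.sum_const, smul_eq_mul]
    _ ≤ (D - 1) * (2 * k - D) := Nat.mul_le_mul_right _ stepC
    _ ≤ k ^ 2 - k := arith_bound k D hD1 hDk

/-- In the `k`-circulant graph on `n ≥ 2k+1` vertices in convex position, every
edge crosses at most `k² − k` other edges. -/
theorem stmt3 (k n : ℕ) (hk : 1 ≤ k) (hn : 2 * k + 1 ≤ n) (a b : Fin n)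
    (hab : (circulant n k).Adj a b) :
    crossCount (circulant n k) a b ≤ k ^ 2 - k := by
  have hn0 : 0 < n := by omega
  obtain ⟨hne, hcd⟩ := hab
  have hsum := dd_add n hn0 a b hne
  have hx0 : (b.1 + n - a.1) % n ≠ 0 := fun h => hne ((dd_zero_iff n hn0 a b).mp h)
  have hxn : (b.1 + n - a.1) % n < n := Nat.mod_lt _ hn0
  rw [cdist_min n a.1 b.1 a.isLt b.isLt] at hcd
  rcases min_le_iff.mp hcd with h | h
  · exact crossCount_le k n hk hn a b (by omega) h
  · rw [crossCount_symm n k hn0 a b hne]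
    exact crossCount_le k n hk hn b a (by omega) h
end

section
/- Let G be a triangulation of a convex polygon on vertices {0,...,n−1} in cyclic order, and let F be a set of additional chords on the same vertex set with G' = G ∪ F. Then G' is 3-connected if and only if every diagonal of G (edge of G that is not a hull edge) crosses at least one edge of F, where two chords cross iff their endpoints interleave cyclically. -/
/-- `{a, b}` is an edge of the convex hull of `n` points in convex position labeled
in cyclic order, i.e. `a` and `b` are cyclically consecutive. -/
def hullEdge (n : ℕ) (a b : Fin n) : Prop :=
  b.1 = (a.1 + 1) % n ∨ a.1 = (b.1 + 1) % n

/-- `G` is a triangulation of the convex polygon on vertices `0,…,n−1` in cyclic order: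
it contains all hull edges, its edges are pairwise non-crossing chords, and it is
edge-maximal with this property (any missing chord would cross an edge of `G`). -/
def IsConvexTriangulation (n : ℕ) (G : SimpleGraph (Fin n)) : Prop :=
  (∀ a b : Fin n, hullEdge n a b → G.Adj a b) ∧
  (∀ a b c d : Fin n, G.Adj a b → G.Adj c d → ¬ crossN n a.1 b.1 c.1 d.1) ∧
  (∀ a b : Fin n, a ≠ b → ¬ G.Adj a b →
    ∃ c d : Fin n, G.Adj c d ∧ crossN n a.1 b.1 c.1 d.1)

/-- A simple graph `G` on a finite vertex type is `k`-connected if it has more than `k`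
vertices and deleting any set of fewer than `k` vertices leaves a connected graph. -/
def KConnected {V : Type*} [Fintype V] (G : SimpleGraph V) (k : ℕ) : Prop :=
  k < Fintype.card V ∧
    ∀ s : Finset V, s.card < k → (G.induce {v : V | v ∉ s}).Connected

private lemma coordP (n a x : ℕ) (ha : a < n) (hx : x < n) :
    ∃ k, (x + n - a) % n = k ∧ k < n ∧ (x = a + k ∨ x + n = a + k) := by
  rcases le_or_gt a x with h | h
  · have h1 : x + n - a = (x - a) + n := by omega
    exact ⟨x - a, by rw [h1, Nat.add_mod_right, Nat.mod_eq_of_lt (by omega)], by omega,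
      Or.inl (by omega)⟩
  · exact ⟨x + n - a, Nat.mod_eq_of_lt (by omega), by omega, Or.inr (by omega)⟩

private lemma succChar (n x : ℕ) (hx : x < n) :
    ∃ s, (x + 1) % n = s ∧ ((x + 1 < n ∧ s = x + 1) ∨ (x + 1 = n ∧ s = 0)) := by
  rcases Nat.lt_or_ge (x + 1) n with h | h
  · exact ⟨x + 1, Nat.mod_eq_of_lt h, Or.inl ⟨h, rfl⟩⟩
  · have h2 : x + 1 = n := by omega
    exact ⟨0, by rw [h2, Nat.mod_self], Or.inr ⟨h2, rfl⟩⟩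

private lemma reach_arc {n : ℕ} (hn : 2 ≤ n) (H : SimpleGraph (Fin n))
    (hHull : ∀ a b : Fin n, hullEdge n a b → H.Adj a b)
    (T : Set (Fin n)) (d : ℕ) :
    ∀ x y : Fin n, (y.1 + n - x.1) % n = d →
      (∀ z : Fin n, (z.1 + n - x.1) % n ≤ d → z ∈ T) →
      ∀ (hx : x ∈ T) (hy : y ∈ T), (H.induce T).Reachable ⟨x, hx⟩ ⟨y, hy⟩ := by
  induction d with
  | zero =>
    intro x y hd hall hx hy
    obtain ⟨k, hk, hk1, hk2⟩ := coordP n x.1 y.1 x.2 y.2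
    have hxy : x = y := Fin.ext (by omega)
    subst hxy
    exact SimpleGraph.Reachable.refl _
  | succ d ih =>
    intro x y hd hall hx hy
    have hn0 : 0 < n := by omega
    have hxlt := x.2
    have hylt := y.2
    obtain ⟨sx, hsx, hsx2⟩ := succChar n x.1 x.2
    set x' : Fin n := ⟨(x.1 + 1) % n, Nat.mod_lt _ hn0⟩ with hx'def
    have hx'v : x'.1 = sx := hsx
    obtain ⟨j, hj, hj1, hj2⟩ := coordP n x.1 x'.1 x.2 x'.2
    obtain ⟨k, hk, hk1, hk2⟩ := coordP n x.1 y.1 x.2 y.2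
    have hj1' : j = 1 := by omega
    have hx'T : x' ∈ T := hall x' (by omega)
    obtain ⟨m, hm, hm1, hm2⟩ := coordP n x'.1 y.1 x'.2 y.2
    have hall' : ∀ z : Fin n, (z.1 + n - x'.1) % n ≤ d → z ∈ T := by
      intro z hz
      obtain ⟨p, hp, hp1, hp2⟩ := coordP n x'.1 z.1 x'.2 z.2
      obtain ⟨q, hq, hq1, hq2⟩ := coordP n x.1 z.1 x.2 z.2
      exact hall z (by omega)
    have hadj : (H.induce T).Adj ⟨x, hx⟩ ⟨x', hx'T⟩ := hHull x x' (Or.inl rfl)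
    exact hadj.reachable.trans (ih x' y (by omega) hall' hx'T hy)

private lemma arc_reach {n : ℕ} (hn : 2 ≤ n) (H : SimpleGraph (Fin n))
    (hHull : ∀ a b : Fin n, hullEdge n a b → H.Adj a b)
    (T : Set (Fin n)) (a b : Fin n)
    (hT : ∀ z : Fin n, 0 < (z.1 + n - a.1) % n → (z.1 + n - a.1) % n < (b.1 + n - a.1) % n →
      z ∈ T)
    (u v : Fin n)
    (hu1 : 0 < (u.1 + n - a.1) % n) (hu2 : (u.1 + n - a.1) % n < (b.1 + n - a.1) % n)
    (hv1 : 0 < (v.1 + n - a.1) % n) (hv2 : (v.1 + n - a.1) % n < (b.1 + n - a.1) % n)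
    (hu : u ∈ T) (hv : v ∈ T) :
    (H.induce T).Reachable ⟨u, hu⟩ ⟨v, hv⟩ := by
  have key : ∀ u v : Fin n, ∀ (hu : u ∈ T) (hv : v ∈ T),
      0 < (u.1 + n - a.1) % n → (u.1 + n - a.1) % n < (b.1 + n - a.1) % n →
      0 < (v.1 + n - a.1) % n → (v.1 + n - a.1) % n < (b.1 + n - a.1) % n →
      (u.1 + n - a.1) % n ≤ (v.1 + n - a.1) % n →
      (H.induce T).Reachable ⟨u, hu⟩ ⟨v, hv⟩ := by
    intro u v hu hv hu1 hu2 hv1 hv2 hle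
    apply reach_arc hn H hHull T ((v.1 + n - u.1) % n) u v rfl _ hu hv
    intro z hz
    obtain ⟨kb, hkb, hkb1, hkb2⟩ := coordP n a.1 b.1 a.2 b.2
    obtain ⟨ku, hku, hku1, hku2⟩ := coordP n a.1 u.1 a.2 u.2
    obtain ⟨kv, hkv, hkv1, hkv2⟩ := coordP n a.1 v.1 a.2 v.2
    obtain ⟨kz, hkz, hkz1, hkz2⟩ := coordP n a.1 z.1 a.2 z.2
    obtain ⟨m, hm, hm1, hm2⟩ := coordP n u.1 z.1 u.2 z.2
    obtain ⟨dd, hdd, hdd1, hdd2⟩ := coordP n u.1 v.1 u.2 v.2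
    exact hT z (by omega) (by omega)
  rcases le_or_gt ((u.1 + n - a.1) % n) ((v.1 + n - a.1) % n) with h | h
  · exact key u v hu hv hu1 hu2 hv1 hv2 h
  · exact (key v u hv hu hv1 hv2 hu1 hu2 (le_of_lt h)).symm
set_option maxHeartbeats 1000000 in
private lemma fwd (n : ℕ) (hn : 4 ≤ n) (G F : SimpleGraph (Fin n))
    (hNC : ∀ a b c d : Fin n, G.Adj a b → G.Adj c d → ¬ crossN n a.1 b.1 c.1 d.1)
    (hconn : ∀ s : Finset (Fin n), s.card < 3 →
      ((G ⊔ F).induce {v : Fin n | v ∉ s}).Connected)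
    (a b : Fin n) (hab : G.Adj a b) (hdiag : ¬ hullEdge n a b) :
    ∃ c d : Fin n, F.Adj c d ∧ crossN n a.1 b.1 c.1 d.1 := by
  have hn2 : 2 ≤ n := by omega
  by_contra hno
  push_neg at hno
  have habne : a ≠ b := hab.ne
  have habv : a.1 ≠ b.1 := fun h => habne (Fin.ext h)
  obtain ⟨K, hK, hK1, hK2⟩ := coordP n a.1 b.1 a.2 b.2
  obtain ⟨sa, hsa, hsa2⟩ := succChar n a.1 a.2
  obtain ⟨sb, hsb, hsb2⟩ := succChar n b.1 b.2
  unfold hullEdge at hdiag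
  push_neg at hdiag
  rw [hsa, hsb] at hdiag
  have halt := a.2
  have hblt := b.2
  have hKb : 2 ≤ K ∧ K ≤ n - 2 := by omega
  have hcard : ({a, b} : Finset (Fin n)).card < 3 := by
    have := Finset.card_insert_le a ({b} : Finset (Fin n))
    simp only [Finset.card_singleton] at this
    omega
  have hcon := hconn {a, b} hcard
  have hmem : ∀ z : Fin n, z.1 ≠ a.1 → z.1 ≠ b.1 →
      z ∈ {v : Fin n | v ∉ ({a, b} : Finset (Fin n))} := by
    intro z h1 h2
    show z ∉ ({a, b} : Finset (Fin n))
    simp only [Finset.mem_insert, Finset.mem_singleton, not_or]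
    exact ⟨fun h => h1 (congrArg Fin.val h), fun h => h2 (congrArg Fin.val h)⟩
  obtain ⟨ku, hku, hku1, hku2⟩ := coordP n a.1 sa a.2 (by omega)
  obtain ⟨kv, hkv, hkv1, hkv2⟩ := coordP n a.1 sb a.2 (by omega)
  have hsalt : sa < n := by omega
  have hsblt : sb < n := by omega
  have huT := hmem ⟨sa, hsalt⟩ (show sa ≠ a.1 by omega) (show sa ≠ b.1 by omega)
  have hvT := hmem ⟨sb, hsblt⟩ (show sb ≠ a.1 by omega) (show sb ≠ b.1 by omega)
  have hstep : ∀ p q : {v : Fin n | v ∉ ({a, b} : Finset (Fin n))},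
      ((G ⊔ F).induce {v : Fin n | v ∉ ({a, b} : Finset (Fin n))}).Adj p q →
      ((p.1.1 + n - a.1) % n < K ↔ (q.1.1 + n - a.1) % n < K) := by
    intro p q hpq
    have hadj : (G ⊔ F).Adj p.1 q.1 := hpq
    have hp2 : p.1 ∉ ({a, b} : Finset (Fin n)) := p.2
    have hq2 : q.1 ∉ ({a, b} : Finset (Fin n)) := q.2
    simp only [Finset.mem_insert, Finset.mem_singleton, not_or] at hp2 hq2
    have hpa : p.1.1 ≠ a.1 := fun h => hp2.1 (Fin.ext h.symm).symm
    have hpb : p.1.1 ≠ b.1 := fun h => hp2.2 (Fin.ext h.symm).symm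
    have hqa : q.1.1 ≠ a.1 := fun h => hq2.1 (Fin.ext h.symm).symm
    have hqb : q.1.1 ≠ b.1 := fun h => hq2.2 (Fin.ext h.symm).symm
    obtain ⟨kp, hkp, hkp1, hkp2⟩ := coordP n a.1 p.1.1 a.2 p.1.2
    obtain ⟨kq, hkq, hkq1, hkq2⟩ := coordP n a.1 q.1.1 a.2 q.1.2
    rw [hkp, hkq]
    by_contra hiff
    have hx : (kp < K ∧ ¬ kq < K) ∨ (kq < K ∧ ¬ kp < K) := by
      rcases Nat.lt_or_ge kp K with h | h <;> rcases Nat.lt_or_ge kq K with h' | h'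
      · exact absurd (iff_of_true h h') hiff
      · exact Or.inl ⟨h, by omega⟩
      · exact Or.inr ⟨h', by omega⟩
      · exact absurd (iff_of_false (by omega) (by omega)) hiff
    have hcross : crossN n a.1 b.1 p.1.1 q.1.1 := by
      refine ⟨fun h => hpa h.symm, fun h => hqa h.symm, fun h => hpb h.symm,
        fun h => hqb h.symm, ?_⟩
      rw [Xor', Xor]
      simp only [cbtw]
      rw [hkp, hkq, hK]
      omega
    rw [SimpleGraph.sup_adj] at hadj
    rcases hadj with hg | hf
    · exact hNC a b p.1 q.1 hab hg hcross
    · exact hno p.1 q.1 hf hcross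
  have hwalk : ∀ (p q : {v : Fin n | v ∉ ({a, b} : Finset (Fin n))})
      (w : ((G ⊔ F).induce {v : Fin n | v ∉ ({a, b} : Finset (Fin n))}).Walk p q),
      ((p.1.1 + n - a.1) % n < K ↔ (q.1.1 + n - a.1) % n < K) := by
    intro p q w
    induction w with
    | nil => exact Iff.rfl
    | cons h w ih => exact (hstep _ _ h).trans ih
  obtain ⟨w⟩ := hcon.preconnected ⟨⟨sa, hsalt⟩, huT⟩ ⟨⟨sb, hsblt⟩, hvT⟩
  have h1 : ((sa + n - a.1) % n < K ↔ (sb + n - a.1) % n < K) := hwalk _ _ w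
  rw [hku, hkv] at h1
  exact absurd (h1.mp (by omega)) (by omega)

set_option maxHeartbeats 1000000 in
private lemma bwd (n : ℕ) (hn : 4 ≤ n) (G F : SimpleGraph (Fin n))
    (hHull : ∀ a b : Fin n, hullEdge n a b → G.Adj a b)
    (hMax : ∀ a b : Fin n, a ≠ b → ¬ G.Adj a b →
      ∃ c d : Fin n, G.Adj c d ∧ crossN n a.1 b.1 c.1 d.1)
    (hF : ∀ a b : Fin n, G.Adj a b → ¬ hullEdge n a b →
      ∃ c d : Fin n, F.Adj c d ∧ crossN n a.1 b.1 c.1 d.1)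
    (s : Finset (Fin n)) (hs : s.card < 3) :
    ((G ⊔ F).induce {v : Fin n | v ∉ s}).Connected := by
  have hn2 : 2 ≤ n := by omega
  have hHull' : ∀ a b : Fin n, hullEdge n a b → (G ⊔ F).Adj a b :=
    fun a b h => Or.inl (hHull a b h)
  rw [SimpleGraph.connected_iff]
  constructor
  · -- preconnected
    intro p q
    rcases Nat.lt_or_ge s.card 2 with hc1 | hc2
    · -- at most one removed vertex
      have hone : ∃ a : Fin n, ∀ z : Fin n, z ∈ s → z = a := by
        rcases Finset.eq_empty_or_nonempty s with rfl | ⟨a, ha⟩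
        · exact ⟨⟨0, by omega⟩, by simp⟩
        · exact ⟨a, fun z hz => Finset.card_le_one.mp (by omega) z hz a ha⟩
      obtain ⟨a, ha⟩ := hone
      have halt := a.2
      obtain ⟨sa, hsa, hsa2⟩ := succChar n a.1 a.2
      have hx0T : (⟨sa, by omega⟩ : Fin n) ∈ {v : Fin n | v ∉ s} := by
        show (⟨sa, by omega⟩ : Fin n) ∉ s
        intro hmem
        have := congrArg Fin.val (ha _ hmem)
        simp only at this
        omega
      have key : ∀ (v : Fin n) (hvT : v ∈ {v : Fin n | v ∉ s}),
          ((G ⊔ F).induce {v : Fin n | v ∉ s}).Reachable ⟨⟨sa, by omega⟩, hx0T⟩ ⟨v, hvT⟩ := by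
        intro v hvT
        have hvlt := v.2
        obtain ⟨kv, hkv, hkv1, hkv2⟩ := coordP n sa v.1 (by omega) v.2
        apply reach_arc hn2 _ hHull' _ kv _ v hkv _ hx0T hvT
        intro z hz
        have hzlt := z.2
        obtain ⟨kz, hkz, hkz1, hkz2⟩ := coordP n sa z.1 (by omega) z.2
        rw [hkz] at hz
        show z ∉ s
        intro hzs
        have hza : z.1 = a.1 := congrArg Fin.val (ha z hzs)
        have hvs : v ∉ s := hvT
        have hzaF : z = a := ha z hzs
        have haS : a ∈ s := hzaF ▸ hzs
        have hva : v.1 ≠ a.1 := fun h => hvs (by rw [(Fin.ext h : v = a)]; exact haS)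
        omega
      exact ((key p.1 p.2).symm.trans (key q.1 q.2))
    · -- exactly two removed vertices
      have hs2 : s.card = 2 := by omega
      obtain ⟨a, b, hab, rfl⟩ := Finset.card_eq_two.mp hs2
      have habv : a.1 ≠ b.1 := fun h => hab (Fin.ext h)
      have halt := a.2
      have hblt := b.2
      obtain ⟨K, hK, hK1, hK2⟩ := coordP n a.1 b.1 a.2 b.2
      obtain ⟨K', hK', hK'1, hK'2⟩ := coordP n b.1 a.1 b.2 a.2
      have hmem : ∀ z : Fin n, z.1 ≠ a.1 → z.1 ≠ b.1 →
          z ∈ {v : Fin n | v ∉ ({a, b} : Finset (Fin n))} := by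
        intro z h1 h2
        show z ∉ ({a, b} : Finset (Fin n))
        simp only [Finset.mem_insert, Finset.mem_singleton, not_or]
        exact ⟨fun h => h1 (congrArg Fin.val h), fun h => h2 (congrArg Fin.val h)⟩
      have hTA : ∀ z : Fin n, 0 < (z.1 + n - a.1) % n →
          (z.1 + n - a.1) % n < (b.1 + n - a.1) % n →
          z ∈ {v : Fin n | v ∉ ({a, b} : Finset (Fin n))} := by
        intro z h1 h2
        have hzlt := z.2
        obtain ⟨kz, hkz, hkz1, hkz2⟩ := coordP n a.1 z.1 a.2 z.2
        rw [hkz] at h1 h2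
        rw [hK] at h2
        exact hmem z (by omega) (by omega)
      have hTB : ∀ z : Fin n, 0 < (z.1 + n - b.1) % n →
          (z.1 + n - b.1) % n < (a.1 + n - b.1) % n →
          z ∈ {v : Fin n | v ∉ ({a, b} : Finset (Fin n))} := by
        intro z h1 h2
        have hzlt := z.2
        obtain ⟨mz, hmz, hmz1, hmz2⟩ := coordP n b.1 z.1 b.2 z.2
        rw [hmz] at h1 h2
        rw [hK'] at h2
        exact hmem z (by omega) (by omega)
      have hclass : ∀ z : Fin n, z ∈ {v : Fin n | v ∉ ({a, b} : Finset (Fin n))} →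
          (0 < (z.1 + n - a.1) % n ∧ (z.1 + n - a.1) % n < (b.1 + n - a.1) % n) ∨
          (0 < (z.1 + n - b.1) % n ∧ (z.1 + n - b.1) % n < (a.1 + n - b.1) % n) := by
        intro z hz
        have hz' : z ∉ ({a, b} : Finset (Fin n)) := hz
        simp only [Finset.mem_insert, Finset.mem_singleton, not_or] at hz'
        have hza : z.1 ≠ a.1 := fun h => hz'.1 (Fin.ext h)
        have hzb : z.1 ≠ b.1 := fun h => hz'.2 (Fin.ext h)
        have hzlt := z.2
        obtain ⟨kz, hkz, hkz1, hkz2⟩ := coordP n a.1 z.1 a.2 z.2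
        obtain ⟨mz, hmz, hmz1, hmz2⟩ := coordP n b.1 z.1 b.2 z.2
        rw [hkz, hmz, hK, hK']
        omega
      have hbridge : 2 ≤ K → K ≤ n - 2 →
          ∃ c d : Fin n, (G ⊔ F).Adj c d ∧ crossN n a.1 b.1 c.1 d.1 := by
        intro hK2' hKn2
        have hnothull : ¬ hullEdge n a b := by
          unfold hullEdge
          obtain ⟨sa, hsa, hsa2⟩ := succChar n a.1 a.2
          obtain ⟨sb, hsb, hsb2⟩ := succChar n b.1 b.2
          rw [hsa, hsb]
          omega
        by_cases hGab : G.Adj a b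
        · obtain ⟨c, d, hcd, hx⟩ := hF a b hGab hnothull
          exact ⟨c, d, Or.inr hcd, hx⟩
        · obtain ⟨c, d, hcd, hx⟩ := hMax a b hab hGab
          exact ⟨c, d, Or.inl hcd, hx⟩
      have hmix : ∀ (u v : Fin n) (hu : u ∈ {v : Fin n | v ∉ ({a, b} : Finset (Fin n))})
          (hv : v ∈ {v : Fin n | v ∉ ({a, b} : Finset (Fin n))}),
          (0 < (u.1 + n - a.1) % n ∧ (u.1 + n - a.1) % n < (b.1 + n - a.1) % n) →
          (0 < (v.1 + n - b.1) % n ∧ (v.1 + n - b.1) % n < (a.1 + n - b.1) % n) →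
          ((G ⊔ F).induce {v : Fin n | v ∉ ({a, b} : Finset (Fin n))}).Reachable
            ⟨u, hu⟩ ⟨v, hv⟩ := by
        intro u v hu hv hua hvb
        have h2K : 2 ≤ K := by
          have := hua.1; have h2 := hua.2
          rw [hK] at h2
          omega
        have hK2n : K ≤ n - 2 := by
          have := hvb.1; have h2 := hvb.2
          rw [hK'] at h2
          omega
        have chain : ∀ c d : Fin n, (G ⊔ F).Adj c d →
            0 < (c.1 + n - a.1) % n → (c.1 + n - a.1) % n < (b.1 + n - a.1) % n →
            0 < (d.1 + n - b.1) % n → (d.1 + n - b.1) % n < (a.1 + n - b.1) % n →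
            ((G ⊔ F).induce {v : Fin n | v ∉ ({a, b} : Finset (Fin n))}).Reachable
              ⟨u, hu⟩ ⟨v, hv⟩ := by
          intro c d hcd hc1 hc2 hd1 hd2
          have hcT := hTA c hc1 hc2
          have hdT := hTB d hd1 hd2
          have r1 := arc_reach hn2 (G ⊔ F) hHull' _ a b hTA u c hua.1 hua.2 hc1 hc2 hu hcT
          have r2 : ((G ⊔ F).induce {v : Fin n | v ∉ ({a, b} : Finset (Fin n))}).Adj
              ⟨c, hcT⟩ ⟨d, hdT⟩ := hcd
          have r3 := arc_reach hn2 (G ⊔ F) hHull' _ b a hTB d v hd1 hd2 hvb.1 hvb.2 hdT hv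
          exact (r1.trans r2.reachable).trans r3
        obtain ⟨c, d, hcd, hx⟩ := hbridge h2K hK2n
        obtain ⟨hac, had, hbc, hbd, hxor⟩ := hx
        have hclt := c.2
        have hdlt := d.2
        obtain ⟨kc, hkc, hkc1, hkc2⟩ := coordP n a.1 c.1 a.2 c.2
        obtain ⟨kd, hkd, hkd1, hkd2⟩ := coordP n a.1 d.1 a.2 d.2
        obtain ⟨mc, hmc, hmc1, hmc2⟩ := coordP n b.1 c.1 b.2 c.2
        obtain ⟨md, hmd, hmd1, hmd2⟩ := coordP n b.1 d.1 b.2 d.2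
        rw [Xor'] at hxor
        simp only [cbtw] at hxor
        rw [hkc, hkd, hK] at hxor
        rcases hxor with ⟨h1, h2⟩ | ⟨h1, h2⟩ <;>
          clear * - chain hcd h1 h2 hK hK' hn habv halt hblt hclt hdlt hK1 hK2 hK'1 hK'2 hkc hkc1 hkc2 hkd hkd1 hkd2 hmc hmc1 hmc2 hmd hmd1 hmd2 hac had hbc hbd
        · apply chain c d hcd
          · rw [hkc]; omega
          · rw [hkc, hK]; omega
          · rw [hmd]; omega
          · rw [hmd, hK']; omega
        · apply chain d c hcd.symm
          · rw [hkd]; omega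
          · rw [hkd, hK]; omega
          · rw [hmc]; omega
          · rw [hmc, hK']; omega
      rcases hclass p.1 p.2 with hpA | hpB <;> rcases hclass q.1 q.2 with hqA | hqB
      · exact arc_reach hn2 (G ⊔ F) hHull' _ a b hTA p.1 q.1 hpA.1 hpA.2 hqA.1 hqA.2 p.2 q.2
      · exact hmix p.1 q.1 p.2 q.2 hpA hqB
      · exact (hmix q.1 p.1 q.2 p.2 hqA hpB).symm
      · exact arc_reach hn2 (G ⊔ F) hHull' _ b a hTB p.1 q.1 hpB.1 hpB.2 hqB.1 hqB.2 p.2 q.2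
  · -- nonempty
    have hpos : 0 < (sᶜ : Finset (Fin n)).card := by
      rw [Finset.card_compl]
      simp only [Fintype.card_fin]
      omega
    obtain ⟨w, hw⟩ := Finset.card_pos.mp hpos
    exact ⟨⟨w, Finset.mem_compl.mp hw⟩⟩

/-- Let `G` be a triangulation of a convex `n`-gon (`n ≥ 4`) and `F` a set of additional
chords on the same vertex set. Then `G ⊔ F` is 3-connected iff every diagonal of `G`
(edge of `G` that is not a hull edge) crosses at least one edge of `F`. -/
theorem stmt10 (n : ℕ) (hn : 4 ≤ n) (G F : SimpleGraph (Fin n))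
    (hG : IsConvexTriangulation n G) :
    KConnected (G ⊔ F) 3 ↔
      ∀ a b : Fin n, G.Adj a b → ¬ hullEdge n a b →
        ∃ c d : Fin n, F.Adj c d ∧ crossN n a.1 b.1 c.1 d.1 := by
  obtain ⟨hHull, hNC, hMax⟩ := hG
  unfold KConnected
  constructor
  · intro hKC a b hab hdiag
    exact fwd n hn G F hNC hKC.2 a b hab hdiag
  · intro hF
    exact ⟨by simp only [Fintype.card_fin]; omega, fun s hs => bwd n hn G F hHull hMax hF s hs⟩
end

section
/- Let G be a triangulation of a convex polygon on n ≥ 4 vertices in cyclic order. Construct F by adding, for each diagonal ab of G with adjacent triangles abc and abd, the chord cd. Then G' = G ∪ F is 3-connected. -/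
/-- For each diagonal `ab` of `G` with adjacent triangles `abc` and `abd`
(`c`, `d` on opposite sides of `ab`), add the chord `cd`. -/
def diagFlips (n : ℕ) (G : SimpleGraph (Fin n)) : SimpleGraph (Fin n) :=
  SimpleGraph.fromRel fun c d =>
    ∃ a b : Fin n, G.Adj a b ∧ ¬ hullEdge n a b ∧
      G.Adj a c ∧ G.Adj b c ∧ G.Adj a d ∧ G.Adj b d ∧ crossN n a.1 b.1 c.1 d.1

namespace Aux
variable {n : ℕ}

def dd (n : ℕ) (u x : Fin n) : ℕ := (x.1 + n - u.1) % n

lemma dd_eq (u x : Fin n) : dd n u x = if u.1 ≤ x.1 then x.1 - u.1 else x.1 + n - u.1 := by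
  have hu := u.2; have hx := x.2
  unfold dd
  rcases le_or_gt u.1 x.1 with h | h
  · rw [if_pos h]
    have he : x.1 + n - u.1 = (x.1 - u.1) + n := by omega
    rw [he, Nat.add_mod_right, Nat.mod_eq_of_lt (by omega)]
  · rw [if_neg (by omega), Nat.mod_eq_of_lt (by omega)]

lemma dd_lt (u x : Fin n) : dd n u x < n := by
  have hu := u.2; have hx := x.2; rw [dd_eq]; split <;> omega

lemma dd_zero_iff (u x : Fin n) : dd n u x = 0 ↔ u = x := by
  have hu := u.2; have hx := x.2
  rw [dd_eq, Fin.ext_iff]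
  split <;> omega

lemma dd_inj {u x y : Fin n} (h : dd n u x = dd n u y) : x = y := by
  have hu := u.2; have hx := x.2; have hy := y.2
  rw [dd_eq, dd_eq] at h
  apply Fin.ext
  split at h <;> split at h <;> omega

lemma dd_cases (u c x : Fin n) :
    dd n u x = dd n u c + dd n c x ∨ dd n u x + n = dd n u c + dd n c x := by
  have hu := u.2; have hc := c.2; have hx := x.2
  rw [dd_eq, dd_eq, dd_eq]
  split <;> split <;> split <;> omega

def nxt (x : Fin n) : Fin n :=
  ⟨(x.1 + 1) % n, Nat.mod_lt _ (Nat.lt_of_le_of_lt (Nat.zero_le _) x.2)⟩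

lemma dd_nxt (u x : Fin n) (h : dd n u x + 1 < n) : dd n u (nxt x) = dd n u x + 1 := by
  have hu := u.2; have hx := x.2
  have hm : ((x.1 + 1) % n = x.1 + 1 ∧ x.1 + 1 < n) ∨ ((x.1 + 1) % n = 0 ∧ x.1 + 1 = n) := by
    rcases Nat.lt_or_ge (x.1 + 1) n with hl | hg
    · exact Or.inl ⟨Nat.mod_eq_of_lt hl, hl⟩
    · have he : x.1 + 1 = n := by omega
      exact Or.inr ⟨by rw [he]; exact Nat.mod_self n, he⟩
  have e2 : dd n u (nxt x)
      = if u.1 ≤ (x.1 + 1) % n then (x.1 + 1) % n - u.1 else (x.1 + 1) % n + n - u.1 :=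
    dd_eq u (nxt x)
  rw [dd_eq] at h
  rw [e2, dd_eq u x]
  rcases hm with ⟨hm, hm2⟩ | ⟨hm, hm2⟩ <;> rw [hm] <;>
    split_ifs at h ⊢ <;> omega

lemma dd_rev {u v : Fin n} (h : u ≠ v) : dd n u v + dd n v u = n := by
  have h0 : dd n u u = 0 := (dd_zero_iff u u).2 rfl
  have hne : dd n u v ≠ 0 := fun he => h ((dd_zero_iff u v).1 he)
  have := dd_lt u v; have := dd_lt v u
  rcases dd_cases u v u with hc | hc <;> omega

lemma hull_nxt (x : Fin n) : hullEdge n x (nxt x) := Or.inl rfl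

lemma cbtw_iff (u v x : Fin n) :
    cbtw n u.1 v.1 x.1 ↔ (0 < dd n u x ∧ dd n u x < dd n u v) := Iff.rfl

lemma ne_val_of_dd_pos {u x : Fin n} (h : 0 < dd n u x) : u.1 ≠ x.1 := fun he => by
  rw [(dd_zero_iff u x).2 (Fin.ext he)] at h; omega

lemma ne_val_of_dd_ne {u x y : Fin n} (h : dd n u x ≠ dd n u y) : x.1 ≠ y.1 := fun he => by
  exact h (by rw [Fin.ext he])

lemma dd_nxt_self (h : 2 ≤ n) (u : Fin n) : dd n u (nxt u) = 1 := by
  have h0 : dd n u u = 0 := (dd_zero_iff u u).2 rfl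
  have := dd_nxt u u (by omega)
  omega

/-- walking along the hull -/
lemma walk {H : SimpleGraph (Fin n)} (hull : ∀ a b : Fin n, hullEdge n a b → H.Adj a b)
    (s : Finset (Fin n)) (w : Fin n) :
    ∀ (k : ℕ) (x y : Fin n) (hx : x ∉ s) (hy : y ∉ s),
      dd n w y = dd n w x + k →
      (∀ z : Fin n, dd n w x ≤ dd n w z → dd n w z ≤ dd n w y → z ∉ s) →
      (H.induce {v : Fin n | v ∉ s}).Reachable ⟨x, hx⟩ ⟨y, hy⟩ := by
  intro k
  induction k with
  | zero =>
    intro x y hx hy hk _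
    have : x = y := dd_inj (u := w) (by omega)
    subst this
    exact SimpleGraph.Reachable.refl _
  | succ k ih =>
    intro x y hx hy hk hzone
    have hylt := dd_lt w y
    have hd : dd n w (nxt x) = dd n w x + 1 := dd_nxt w x (by omega)
    have hx' : nxt x ∉ s := hzone (nxt x) (by omega) (by omega)
    have hadj : (H.induce {v : Fin n | v ∉ s}).Adj ⟨x, hx⟩ ⟨nxt x, hx'⟩ :=
      hull x (nxt x) (hull_nxt x)
    exact hadj.reachable.trans
      (ih (nxt x) y hx' hy (by omega) (fun z h1 h2 => hzone z (by omega) h2))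

lemma walk2 {H : SimpleGraph (Fin n)} (hull : ∀ a b : Fin n, hullEdge n a b → H.Adj a b)
    (s : Finset (Fin n)) (w x y : Fin n) (hx : x ∉ s) (hy : y ∉ s)
    (hz : ∀ z : Fin n, min (dd n w x) (dd n w y) ≤ dd n w z →
      dd n w z ≤ max (dd n w x) (dd n w y) → z ∉ s) :
    (H.induce {v : Fin n | v ∉ s}).Reachable ⟨x, hx⟩ ⟨y, hy⟩ := by
  rcases le_total (dd n w x) (dd n w y) with h | h
  · exact walk hull s w (dd n w y - dd n w x) x y hx hy (by omega)
      (fun z h1 h2 => hz z (by omega) (by omega))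
  · exact (walk hull s w (dd n w x - dd n w y) y x hy hx (by omega)
      (fun z h1 h2 => hz z (by omega) (by omega))).symm

end Aux

namespace Aux
variable {n : ℕ}

lemma triangle (hn : 4 ≤ n) {G : SimpleGraph (Fin n)} (hG : IsConvexTriangulation n G)
    {u v w : Fin n} (huv : G.Adj u v) (hw1 : 0 < dd n u w) (hw2 : dd n u w < dd n u v) :
    ∃ c : Fin n, (0 < dd n u c ∧ dd n u c < dd n u v) ∧ G.Adj u c ∧ G.Adj v c := by
  classical
  obtain ⟨hull, nocross, maxl⟩ := hG
  have han := dd_lt u v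
  set S : Finset (Fin n) :=
    Finset.univ.filter (fun c => (0 < dd n u c ∧ dd n u c < dd n u v) ∧ G.Adj u c) with hS
  have hu1 : dd n u (nxt u) = 1 := dd_nxt_self (by omega) u
  have hSne : S.Nonempty := ⟨nxt u, by
    simp only [hS, Finset.mem_filter, Finset.mem_univ, true_and]
    exact ⟨⟨by omega, by omega⟩, hull u (nxt u) (hull_nxt u)⟩⟩
  obtain ⟨c, hcS, hcmax⟩ := Finset.exists_max_image S (fun c => dd n u c) hSne
  simp only [hS, Finset.mem_filter, Finset.mem_univ, true_and] at hcS
  obtain ⟨⟨hc1, hc2⟩, hcu⟩ := hcS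
  refine ⟨c, ⟨hc1, hc2⟩, hcu, ?_⟩
  by_contra hvc
  have hcvne : c ≠ v := fun h => by rw [h] at hc2; omega
  obtain ⟨p, q, hpq, hcr⟩ := maxl c v hcvne (fun h => hvc h.symm)
  obtain ⟨hcp, hcq, hvp, hvq, hxor⟩ := hcr
  have main : ∀ p q : Fin n, G.Adj p q → c.1 ≠ p.1 → c.1 ≠ q.1 → v.1 ≠ p.1 → v.1 ≠ q.1 →
      (0 < dd n c p ∧ dd n c p < dd n c v) →
      ¬(0 < dd n c q ∧ dd n c q < dd n c v) → False := by
    intro p q hpq hcp hcq hvp hvq hbp hbq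
    have hdcv : dd n c v = dd n u v - dd n u c := by
      have := dd_lt c v
      rcases dd_cases u c v with h | h <;> omega
    have hdup : dd n u p = dd n u c + dd n c p := by
      have := dd_lt u p
      rcases dd_cases u c p with h | h <;> omega
    have hq0 : dd n c q ≠ 0 := fun h => hcq (congrArg Fin.val ((dd_zero_iff c q).1 h))
    have hqv : dd n c q ≠ dd n c v := fun h => hvq (congrArg Fin.val (dd_inj (u := c) h)).symm
    have hqbig : dd n u v - dd n u c < dd n c q := by omega
    have hdcq := dd_lt c q
    rcases dd_cases u c q with h | h
    · -- dd u q = dd u c + dd c q > a : pq crosses uv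
      refine nocross u v p q huv hpq ⟨?_, ?_, ?_, ?_, Or.inl ⟨?_, ?_⟩⟩
      · exact ne_val_of_dd_pos (by omega)
      · exact ne_val_of_dd_pos (by omega)
      · exact (ne_val_of_dd_ne (u := u) (x := p) (y := v) (by omega)).symm
      · exact (ne_val_of_dd_ne (u := u) (x := q) (y := v) (by omega)).symm
      · exact (cbtw_iff u v p).2 ⟨by omega, by omega⟩
      · intro hb
        have := (cbtw_iff u v q).1 hb
        omega
    · -- dd u q = dd u c + dd c q - n < dd u c
      have hduq := dd_lt u q
      rcases Nat.eq_zero_or_pos (dd n u q) with h0 | h0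
      · -- q = u : p ∈ S beyond c
        have hqu : u = q := (dd_zero_iff u q).1 h0
        have hup : G.Adj u p := by rw [hqu]; exact hpq.symm
        have hpS : p ∈ S := by
          simp only [hS, Finset.mem_filter, Finset.mem_univ, true_and]
          exact ⟨⟨by omega, by omega⟩, hup⟩
        have := hcmax p hpS
        omega
      · -- pq crosses uc
        refine nocross u c q p hcu hpq.symm ⟨?_, ?_, ?_, ?_, Or.inl ⟨?_, ?_⟩⟩
        · exact ne_val_of_dd_pos h0
        · exact ne_val_of_dd_pos (by omega)
        · exact hcq
        · exact hcp
        · exact (cbtw_iff u c q).2 ⟨by omega, by omega⟩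
        · intro hb
          have := (cbtw_iff u c p).1 hb
          omega
  rcases hxor with ⟨h1, h2⟩ | ⟨h1, h2⟩
  · exact main p q hpq hcp hcq hvp hvq ((cbtw_iff c v p).1 h1)
      (fun hb => h2 ((cbtw_iff c v q).2 hb))
  · exact main q p hpq.symm hcq hcp hvq hvp ((cbtw_iff c v q).1 h1)
      (fun hb => h2 ((cbtw_iff c v p).2 hb))

end Aux

namespace Aux
variable {n : ℕ}

lemma hull_iff (h2 : 2 ≤ n) (u v : Fin n) :
    hullEdge n u v ↔ (dd n u v = 1 ∨ dd n v u = 1) := by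
  constructor
  · rintro (h | h)
    · left
      have : v = nxt u := Fin.ext h
      rw [this]; exact dd_nxt_self h2 u
    · right
      have : u = nxt v := Fin.ext h
      rw [this]; exact dd_nxt_self h2 v
  · rintro (h | h)
    · left
      have : v = nxt u := dd_inj (u := u) (by rw [h, dd_nxt_self h2])
      rw [this]; rfl
    · right
      have : u = nxt v := dd_inj (u := v) (by rw [h, dd_nxt_self h2])
      rw [this]; rfl

lemma bridge (hn : 4 ≤ n) {G : SimpleGraph (Fin n)} (hG : IsConvexTriangulation n G)
    {u v x y : Fin n} (hx1 : 0 < dd n u x) (hx2 : dd n u x < dd n u v)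
    (hy : dd n u v < dd n u y) :
    ∃ c d : Fin n, (0 < dd n u c ∧ dd n u c < dd n u v) ∧ dd n u v < dd n u d ∧
      (G ⊔ diagFlips n G).Adj c d := by
  have han := dd_lt u v
  have hay := dd_lt u y
  have huv : u ≠ v := fun h => by
    rw [(dd_zero_iff u v).2 h] at hx2; omega
  have hrev := dd_rev huv
  by_cases hadj : G.Adj u v
  · -- diagonal case: use the two triangles
    have hnh : ¬ hullEdge n u v := by
      rw [hull_iff (by omega)]
      push_neg
      constructor <;> omega
    obtain ⟨c, hc, hucA, hvcA⟩ := triangle hn hG hadj hx1 hx2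
    have hdvy : dd n v y = dd n u y - dd n u v := by
      have := dd_lt v y
      rcases dd_cases u v y with h | h <;> omega
    obtain ⟨d, hd, hvdA, hudA⟩ := triangle hn hG hadj.symm
      (w := y) (by omega) (by omega)
    have hdud : dd n u d = dd n u v + dd n v d := by
      have := dd_lt u d
      rcases dd_cases u v d with h | h <;> omega
    refine ⟨c, d, hc, by omega, ?_⟩
    rw [SimpleGraph.sup_adj]
    right
    rw [diagFlips, SimpleGraph.fromRel_adj]
    refine ⟨fun h => by rw [h] at hc; omega, Or.inl ⟨u, v, hadj, hnh, hucA, hvcA, hudA, hvdA,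
      ?_, ?_, ?_, ?_, Or.inl ⟨?_, ?_⟩⟩⟩
    · exact ne_val_of_dd_pos hc.1
    · exact ne_val_of_dd_pos (by omega)
    · exact (ne_val_of_dd_ne (u := u) (x := c) (y := v) (by omega)).symm
    · exact (ne_val_of_dd_ne (u := u) (x := d) (y := v) (by omega)).symm
    · exact (cbtw_iff u v c).2 hc
    · intro hb
      have := (cbtw_iff u v d).1 hb
      omega
  · -- non-adjacent: maximality gives a crossing chord
    obtain ⟨c, d, hcd, hcr⟩ := hG.2.2 u v huv hadj
    obtain ⟨h1, h2, h3, h4, hxor⟩ := hcr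
    have key : ∀ c d : Fin n, G.Adj c d → u.1 ≠ c.1 → u.1 ≠ d.1 → v.1 ≠ c.1 → v.1 ≠ d.1 →
        cbtw n u.1 v.1 c.1 → ¬ cbtw n u.1 v.1 d.1 →
        ∃ c d : Fin n, (0 < dd n u c ∧ dd n u c < dd n u v) ∧ dd n u v < dd n u d ∧
          (G ⊔ diagFlips n G).Adj c d := by
      intro c d hcd h1 h2 h3 h4 hb hnb
      have hbc := (cbtw_iff u v c).1 hb
      have hd0 : dd n u d ≠ 0 := fun h => h2 (congrArg Fin.val ((dd_zero_iff u d).1 h))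
      have hda : dd n u d ≠ dd n u v := fun h => h4 (congrArg Fin.val (dd_inj (u := u) h)).symm
      have hnb' : ¬(0 < dd n u d ∧ dd n u d < dd n u v) := fun h => hnb ((cbtw_iff u v d).2 h)
      exact ⟨c, d, hbc, by omega, (SimpleGraph.sup_adj _ _ _ _).2 (Or.inl hcd)⟩
    rcases hxor with ⟨hb, hnb⟩ | ⟨hb, hnb⟩
    · exact key c d hcd h1 h2 h3 h4 hb hnb
    · exact key d c hcd.symm h2 h1 h4 h3 hb hnb

end Aux


open Aux

/-- Augmenting a triangulation `G` of a convex `n`-gon (`n ≥ 4`) by adding, for every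
diagonal `ab` with adjacent triangles `abc`, `abd`, the chord `cd`, yields a
3-connected graph. -/
theorem stmt11 (n : ℕ) (hn : 4 ≤ n) (G : SimpleGraph (Fin n))
    (hG : IsConvexTriangulation n G) :
    KConnected (G ⊔ diagFlips n G) 3 := by
  classical
  constructor
  · simp only [Fintype.card_fin]; omega
  intro s hs
  rw [SimpleGraph.connected_iff]
  have hex : ∃ w : Fin n, w ∉ s := by
    by_contra h
    push_neg at h
    have hsub : (Finset.univ : Finset (Fin n)) ⊆ s := fun w _ => h w
    have := Finset.card_le_card hsub
    rw [Finset.card_univ, Fintype.card_fin] at this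
    omega
  refine ⟨?_, by obtain ⟨w, hw⟩ := hex; exact ⟨⟨w, hw⟩⟩⟩
  -- find u v covering s
  obtain ⟨u, v, huvne, hcov⟩ : ∃ u v : Fin n, u ≠ v ∧ ∀ z ∈ s, z = u ∨ z = v := by
    rcases s.eq_empty_or_nonempty with h | h
    · exact ⟨⟨0, by omega⟩, ⟨1, by omega⟩, by simp [Fin.ext_iff], by simp [h]⟩
    · obtain ⟨u, hu⟩ := h
      rcases (s.erase u).eq_empty_or_nonempty with h2 | h2
      · refine ⟨u, nxt u, ?_, ?_⟩
        · intro he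
          have h1 : dd n u (nxt u) = 1 := dd_nxt_self (by omega) u
          rw [← he, (dd_zero_iff u u).2 rfl] at h1
          omega
        · intro z hz
          left
          by_contra hne
          exact absurd (Finset.mem_erase.2 ⟨hne, hz⟩) (by simp [h2])
      · obtain ⟨v, hv⟩ := h2
        rw [Finset.mem_erase] at hv
        refine ⟨u, v, Ne.symm hv.1, ?_⟩
        intro z hz
        by_contra hne
        push_neg at hne
        have hsub : ({z, u, v} : Finset (Fin n)) ⊆ s := by
          intro w hw
          simp only [Finset.mem_insert, Finset.mem_singleton] at hw
          rcases hw with rfl | rfl | rfl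
          · exact hz
          · exact hu
          · exact hv.2
        have hc3 : ({z, u, v} : Finset (Fin n)).card = 3 := by
          rw [Finset.card_insert_of_notMem (by simp [hne.1, hne.2]),
            Finset.card_insert_of_notMem (by simp [hv.1.symm]), Finset.card_singleton]
        have := Finset.card_le_card hsub
        omega
  have hullH : ∀ a b : Fin n, hullEdge n a b → (G ⊔ diagFlips n G).Adj a b := fun a b h =>
    (SimpleGraph.sup_adj _ _ _ _).2 (Or.inl (hG.1 a b h))
  have hrev := dd_rev huvne
  have han := dd_lt u v
  have ha0 : 0 < dd n u v := by
    rcases Nat.eq_zero_or_pos (dd n u v) with h0 | h0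
    · exact absurd ((dd_zero_iff u v).1 h0) huvne
    · exact h0
  -- key crossing case
  have cross : ∀ (x y : Fin n) (hx : x ∉ s) (hy : y ∉ s), v ∈ s →
      dd n u x < dd n u v → dd n u v < dd n u y →
      ((G ⊔ diagFlips n G).induce {w : Fin n | w ∉ s}).Reachable ⟨x, hx⟩ ⟨y, hy⟩ := by
    intro x y hx hy hvs htx hty
    by_cases hus : u ∈ s
    · have hx0 : 0 < dd n u x := by
        rcases Nat.eq_zero_or_pos (dd n u x) with h0 | h0
        · exact absurd (((dd_zero_iff u x).1 h0) ▸ hus) hx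
        · exact h0
      have hy0 : dd n u y < n := dd_lt u y
      obtain ⟨c, d, hc, hd, hcdadj⟩ := bridge hn hG hx0 htx hty
      have hdn := dd_lt u d
      have hcns : c ∉ s := by
        intro hcs
        rcases hcov c hcs with rfl | rfl
        · rw [(dd_zero_iff c c).2 rfl] at hc; omega
        · omega
      have hdns : d ∉ s := by
        intro hds
        rcases hcov d hds with rfl | rfl
        · rw [(dd_zero_iff d d).2 rfl] at hd; omega
        · omega
      have r1 : ((G ⊔ diagFlips n G).induce {w : Fin n | w ∉ s}).Reachable ⟨x, hx⟩ ⟨c, hcns⟩ := by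
        apply walk2 hullH s u x c hx hcns
        intro z h1 h2 hzs
        rcases hcov z hzs with rfl | rfl
        · rw [(dd_zero_iff z z).2 rfl] at h1; omega
        · omega
      have r2 : ((G ⊔ diagFlips n G).induce {w : Fin n | w ∉ s}).Reachable ⟨d, hdns⟩ ⟨y, hy⟩ := by
        apply walk2 hullH s u d y hdns hy
        intro z h1 h2 hzs
        rcases hcov z hzs with rfl | rfl
        · rw [(dd_zero_iff z z).2 rfl] at h1; omega
        · omega
      have hadj : ((G ⊔ diagFlips n G).induce {w : Fin n | w ∉ s}).Adj ⟨c, hcns⟩ ⟨d, hdns⟩ :=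
        hcdadj
      exact r1.trans (hadj.reachable.trans r2)
    · -- go around the other side, anchored at v
      have hdvx : dd n v x = dd n u x + n - dd n u v := by
        have := dd_lt v x
        rcases dd_cases u v x with h | h <;> omega
      have hdvy : dd n v y = dd n u y - dd n u v := by
        have := dd_lt v y
        rcases dd_cases u v y with h | h <;> omega
      apply walk2 hullH s v x y hx hy
      intro z h1 h2 hzs
      rcases hcov z hzs with rfl | rfl
      · exact hus hzs
      · rw [(dd_zero_iff z z).2 rfl] at h1
        have := dd_lt u x
        omega
  rintro ⟨x, hx⟩ ⟨y, hy⟩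
  have hx' : x ∉ s := hx
  have hy' : y ∉ s := hy
  by_cases hvs : v ∈ s
  · have hxv : dd n u x ≠ dd n u v := fun h => hx' (by rw [dd_inj (u := u) h]; exact hvs)
    have hyv : dd n u y ≠ dd n u v := fun h => hy' (by rw [dd_inj (u := u) h]; exact hvs)
    by_cases hmid : dd n u x < dd n u v ∧ dd n u v < dd n u y
    · exact cross x y hx' hy' hvs hmid.1 hmid.2
    · by_cases hmid2 : dd n u y < dd n u v ∧ dd n u v < dd n u x
      · exact (cross y x hy' hx' hvs hmid2.1 hmid2.2).symm
      · apply walk2 hullH s u x y hx' hy'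
        intro z h1 h2 hzs
        rcases hcov z hzs with rfl | rfl
        · have hxz : dd n z x ≠ 0 := fun h => hx' (by rw [← (dd_zero_iff z x).1 h]; exact hzs)
          have hyz : dd n z y ≠ 0 := fun h => hy' (by rw [← (dd_zero_iff z y).1 h]; exact hzs)
          rw [(dd_zero_iff z z).2 rfl] at h1
          omega
        · omega
  · apply walk2 hullH s u x y hx' hy'
    intro z h1 h2 hzs
    rcases hcov z hzs with rfl | rfl
    · have hxz : dd n z x ≠ 0 := fun h => hx' (by rw [← (dd_zero_iff z x).1 h]; exact hzs)
      have hyz : dd n z y ≠ 0 := fun h => hy' (by rw [← (dd_zero_iff z y).1 h]; exact hzs)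
      rw [(dd_zero_iff z z).2 rfl] at h1
      omega
    · exact hvs hzs
end
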